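/- Let $a = a_{1} < a_{2} < \cdots < a_{K'+1} = a + L$ be equally spaced with spacing $L/K'$, and fix $\mu_k \in [\,(a_k+a_{k+1})/2 - L/(6K'^2),\ (a_k+a_{k+1})/2 + L/(6K'^2)\,]$ for each $k$, and $\lambda \in [L^2/(2K'^4), L^2/K'^4]$. Then for any $x$ in the shrunken interval $(a_k + L/(5K'^2),\ a_{k+1} - L/(5K'^2)]$ and any $j \neq k$ with $|\mu_j - \mu_k| \ge L/K' - L/(3K'^2)$, one has $\frac{(x-\mu_j)^2 - (x-\mu_k)^2}{2\lambda} \ge \frac{K'}{30}$ whenever $K' \ge 2$. -/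
import Mathlib

set_option maxHeartbeats 1000000


noncomputable def gridPt (a L : ℝ) (K' : ℕ) (m : ℕ) : ℝ :=
  a + L * ((m : ℝ) - 1) / (K' : ℝ)

theorem stmt15 (a L lam : ℝ) (hL : 0 < L) (K' : ℕ) (hK' : 2 ≤ K')
    (μ : ℕ → ℝ) (k j : ℕ) (hk1 : 1 ≤ k) (hkK : k ≤ K') (hj1 : 1 ≤ j) (hjK : j ≤ K')
    (hjk : j ≠ k)
    (hμ : ∀ m, 1 ≤ m → m ≤ K' →
      μ m ∈ Set.Icc ((gridPt a L K' m + gridPt a L K' (m + 1)) / 2 - L / (6 * (K' : ℝ) ^ 2))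
                    ((gridPt a L K' m + gridPt a L K' (m + 1)) / 2 + L / (6 * (K' : ℝ) ^ 2)))
    (hlam : lam ∈ Set.Icc (L ^ 2 / (2 * (K' : ℝ) ^ 4)) (L ^ 2 / (K' : ℝ) ^ 4))
    (hsep : |μ j - μ k| ≥ L / K' - L / (3 * (K' : ℝ) ^ 2))
    (x : ℝ)
    (hx : x ∈ Set.Ioc (gridPt a L K' k + L / (5 * (K' : ℝ) ^ 2))
                      (gridPt a L K' (k + 1) - L / (5 * (K' : ℝ) ^ 2))) :
    ((x - μ j) ^ 2 - (x - μ k) ^ 2) / (2 * lam) ≥ (K' : ℝ) / 30 := by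
  obtain ⟨hμk1, hμk2⟩ := hμ k hk1 hkK
  obtain ⟨hμj1, hμj2⟩ := hμ j hj1 hjK
  obtain ⟨hlam1, hlam2⟩ := hlam
  obtain ⟨hx1, hx2⟩ := hx
  simp only [gridPt] at hμk1 hμk2 hμj1 hμj2 hx1 hx2
  push_cast at hμk1 hμk2 hμj1 hμj2 hx1 hx2
  have hN : (2:ℝ) ≤ (K' : ℝ) := by exact_mod_cast hK'
  clear hμ hsep
  obtain ⟨N, hNe⟩ : ∃ y : ℝ, y = (K' : ℝ) := ⟨_, rfl⟩
  rw [← hNe] at hμk1 hμk2 hμj1 hμj2 hx1 hx2 hlam1 hlam2 hN ⊢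
  have hN0 : (0:ℝ) < N := by linarith
  have hlampos : (0:ℝ) < lam := lt_of_lt_of_le (by positivity) hlam1
  obtain ⟨A, hAdef⟩ : ∃ y : ℝ, y = L/(2*N) + L/(30*N^2) := ⟨_, rfl⟩
  obtain ⟨B, hBdef⟩ : ∃ y : ℝ, y = L/(2*N) - L/(30*N^2) := ⟨_, rfl⟩
  have hA0 : 0 ≤ A := by rw [hAdef]; positivity
  -- bound on (x - μ k)^2
  have hBu : x - μ k ≤ B := by
    have id1 : (a + L*((k:ℝ)+1-1)/N - L/(5*N^2))
        - ((a + L * ((k:ℝ) - 1) / N + (a + L * ((k:ℝ) + 1 - 1) / N)) / 2 - L/(6*N^2)) = B := by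
      rw [hBdef]; ring
    linarith [hx2, hμk1, id1]
  have hBl : -B ≤ x - μ k := by
    have id1 : (a + L*((k:ℝ)-1)/N + L/(5*N^2))
        - ((a + L * ((k:ℝ) - 1) / N + (a + L * ((k:ℝ) + 1 - 1) / N)) / 2 + L/(6*N^2)) = -B := by
      rw [hBdef]; ring
    linarith [hx1, hμk2, id1]
  have hB2 : (x - μ k)^2 ≤ B^2 := sq_le_sq' hBl hBu
  -- bound on (x - μ j)^2
  have hAsq : A^2 ≤ (x - μ j)^2 := by
    rcases lt_or_gt_of_ne hjk with hlt | hgt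
    · -- j < k
      have hj' : (j:ℝ) + 1 ≤ (k:ℝ) := by exact_mod_cast hlt
      have key : L/(2*N) ≤ L*(2*(k:ℝ)-2*(j:ℝ)-1)/(2*N) := by
        rw [div_le_div_iff₀ (by positivity) (by positivity)]
        nlinarith [mul_nonneg (mul_nonneg hL.le (by linarith : (0:ℝ) ≤ 2*N))
          (by linarith : (0:ℝ) ≤ 2*(k:ℝ)-2*(j:ℝ)-2)]
      have h1 : A ≤ x - μ j := by
        have id2 : (a + L*((k:ℝ)-1)/N + L/(5*N^2))
            - ((a + L * ((j:ℝ) - 1) / N + (a + L * ((j:ℝ) + 1 - 1) / N)) / 2 + L/(6*N^2))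
            = L*(2*(k:ℝ)-2*(j:ℝ)-1)/(2*N) - L/(2*N) + A := by
          rw [hAdef]; ring
        linarith [hx1, hμj2, id2, key]
      exact pow_le_pow_left₀ hA0 h1 2
    · -- j > k
      have hj' : (k:ℝ) + 1 ≤ (j:ℝ) := by exact_mod_cast hgt
      have key : L/(2*N) ≤ L*(2*(j:ℝ)-2*(k:ℝ)-1)/(2*N) := by
        rw [div_le_div_iff₀ (by positivity) (by positivity)]
        nlinarith [mul_nonneg (mul_nonneg hL.le (by linarith : (0:ℝ) ≤ 2*N))
          (by linarith : (0:ℝ) ≤ 2*(j:ℝ)-2*(k:ℝ)-2)]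
      have h1 : A ≤ μ j - x := by
        have id2 : ((a + L * ((j:ℝ) - 1) / N + (a + L * ((j:ℝ) + 1 - 1) / N)) / 2 - L/(6*N^2))
            - (a + L*((k:ℝ)+1-1)/N - L/(5*N^2))
            = L*(2*(j:ℝ)-2*(k:ℝ)-1)/(2*N) - L/(2*N) + A := by
          rw [hAdef]; ring
        linarith [hx2, hμj1, id2, key]
      calc A^2 ≤ (μ j - x)^2 := pow_le_pow_left₀ hA0 h1 2
        _ = (x - μ j)^2 := by ring
  have hf : L^2/(15*N^3) ≤ (x - μ j)^2 - (x - μ k)^2 := by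
    have idAB : A^2 - B^2 = L^2/(15*N^3) := by rw [hAdef, hBdef]; ring
    linarith [hAsq, hB2, idAB]
  rw [ge_iff_le, le_div_iff₀ (by positivity : (0:ℝ) < 2*lam)]
  have hlam2' : lam * N^4 ≤ L^2 := (le_div_iff₀ (by positivity)).mp hlam2
  have step : N/30 * (2*lam) ≤ L^2/(15*N^3) := by
    rw [div_mul_eq_mul_div, div_le_div_iff₀ (by norm_num : (0:ℝ) < 30) (by positivity)]
    nlinarith [hlam2', hN0, hL]
  linarith [step, hf]
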